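/- For r = 2, p ≥ 2: the minimum degree of OΓ_n^{(p,2)} equals 1 if n ≤ 2p−1, and equals ⌊n/(2p)⌋ + 1 if n ≥ 2p. -/

import Mathlib

/-- Hamming distance between two binary words (as lists). -/
def hdist (u v : List Bool) : ℕ := (List.zipWith bne u v).count true

/-- `w` is an I-Fibonacci (p,r)-code: no factor `1^(r+1)` and no factor `1 0^s 1` with `s < p`
(equivalently: maximal blocks of 1s have length ≤ r and blocks of 1s are separated by ≥ p zeros). -/
def ICode (p r : ℕ) (w : List Bool) : Prop :=
  ¬ (List.replicate (r + 1) true <:+: w) ∧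
  ∀ s < p, ¬ ((true :: (List.replicate s false ++ [true])) <:+: w)

/-- `w` is an O-Fibonacci (p,r)-code: no factor `(10^(p-1))^r 1` and no factor `1 0^s 1`
with `s ≤ p - 2`. -/
def OCode (p r : ℕ) (w : List Bool) : Prop :=
  ¬ (((List.replicate r (true :: List.replicate (p - 1) false)).flatten ++ [true]) <:+: w) ∧
  ∀ s, s + 2 ≤ p → ¬ ((true :: (List.replicate s false ++ [true])) <:+: w)

/-- Vertex type of the I-Fibonacci (p,r)-cube of dimension n. -/
def IVert (p r n : ℕ) := {w : List Bool // w.length = n ∧ ICode p r w}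

/-- Vertex type of the O-Fibonacci (p,r)-cube of dimension n. -/
def OVert (p r n : ℕ) := {w : List Bool // w.length = n ∧ OCode p r w}

/-- The I-Fibonacci (p,r)-cube: vertices adjacent iff they differ in exactly one coordinate. -/
def IGraph (p r n : ℕ) : SimpleGraph (IVert p r n) :=
  SimpleGraph.fromRel (fun u v => hdist u.1 v.1 = 1)

/-- The O-Fibonacci (p,r)-cube. -/
def OGraph (p r n : ℕ) : SimpleGraph (OVert p r n) :=
  SimpleGraph.fromRel (fun u v => hdist u.1 v.1 = 1)

/-- Eccentricity of a vertex. -/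
noncomputable def ecc {V : Type*} (G : SimpleGraph V) (v : V) : ℕ :=
  sSup {d | ∃ u, G.dist v u = d}

/-- Radius of a graph. -/
noncomputable def grad {V : Type*} (G : SimpleGraph V) : ℕ :=
  sInf {e | ∃ v, ecc G v = e}

/-- Diameter of a graph. -/
noncomputable def gdiam {V : Type*} (G : SimpleGraph V) : ℕ :=
  sSup {d | ∃ u v, G.dist u v = d}

/-- Degree of a vertex (number of neighbours). -/
noncomputable def deg {V : Type*} (G : SimpleGraph V) (v : V) : ℕ :=
  {u | G.Adj v u}.ncard

/-!
For `r = 2` the O-code condition says that ones are at least `p` apart and that no three ones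
sit at `a, a + p, a + 2p` (`oCode_two_iff_sparse`). The neighbours of a word are its flips at
positions where the result is still sparse; flipping a one always is.

Lower bound: scanning from the left, one finds a prefix of length `c ≤ 2p·k` containing `k`
flippable positions whose ones all lie more than `p` before the cut, so that flips of the
remaining suffix stay flippable in the whole word; induction gives `n < 2p · deg`.

Upper bound: ones at `p - 1`, at `p - 1 + d` with `d ∈ {p, 2p}`, and every `2p` after that
leave no zero flippable, since every zero is closer than `p` to a one or is the midpoint of two
ones `2p` apart.
-/

open Finset

def bit (w : List Bool) (i : ℕ) : Bool := w[i]?.getD false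

def ones (w : List Bool) : Set ℕ := {i | bit w i = true}

@[simp] lemma mem_ones {w : List Bool} {i : ℕ} : i ∈ ones w ↔ bit w i = true := Iff.rfl

lemma lt_length_of_mem_ones {w : List Bool} {i : ℕ} (h : i ∈ ones w) : i < w.length := by
  by_contra h'
  simp [bit, List.getElem?_eq_none (not_lt.1 h')] at h

lemma bit_drop {w : List Bool} (c j : ℕ) : bit (w.drop c) j = bit w (c + j) := by
  simp [bit, List.getElem?_drop]

lemma ones_drop {w : List Bool} (c : ℕ) : ones (w.drop c) = (c + ·) ⁻¹' ones w := by
  ext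
  simp [bit_drop]

lemma infix_iff_bit {t w : List Bool} :
    t <:+: w ↔
      ∃ k, k + t.length ≤ w.length ∧ ∀ j < t.length, bit w (k + j) = bit t j := by
  rw [List.infix_iff_getElem?]
  constructor
  · rintro ⟨k, hk, h⟩
    refine ⟨k, by omega, fun j hj => ?_⟩
    simp [bit, add_comm k j, h j hj, List.getElem?_eq_getElem hj]
  · rintro ⟨k, hk, h⟩
    refine ⟨k, by omega, fun j hj => ?_⟩
    have := h j hj
    simp only [bit, List.getElem?_eq_getElem hj,
      List.getElem?_eq_getElem (by omega : k + j < w.length), Option.getD_some] at this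
    simp [add_comm j k, List.getElem?_eq_getElem (by omega : k + j < w.length), this]

lemma bit_true_cons_replicate_append (s j : ℕ) (l : List Bool) :
    bit (true :: (List.replicate s false ++ l)) j =
      if j = 0 then true else if j ≤ s then false else bit l (j - s - 1) := by
  simp only [bit, List.getElem?_cons, List.getElem?_append, List.getElem?_replicate,
    List.length_replicate]
  split_ifs <;> first | rfl | omega | (congr 2; omega)

lemma bit_singleton_true (j : ℕ) : bit [true] j = decide (j = 0) := by
  rcases j with _ | j <;> rfl

def gapPattern (s : ℕ) : List Bool := true :: (List.replicate s false ++ [true])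

def progPattern (p : ℕ) : List Bool :=
  (List.replicate 2 (true :: List.replicate (p - 1) false)).flatten ++ [true]

lemma progPattern_eq (p : ℕ) :
    progPattern p = true :: (List.replicate (p - 1) false ++ gapPattern (p - 1)) := by
  simp [progPattern, gapPattern]

lemma length_gapPattern (s : ℕ) : (gapPattern s).length = s + 2 := by
  simp [gapPattern]

lemma length_progPattern {p : ℕ} (hp : 0 < p) : (progPattern p).length = 2 * p + 1 := by
  rw [progPattern_eq, List.length_cons, List.length_append, List.length_replicate,
    length_gapPattern]
  omega

lemma bit_gapPattern (s j : ℕ) : bit (gapPattern s) j = true ↔ j = 0 ∨ j = s + 1 := by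
  rw [gapPattern, bit_true_cons_replicate_append, bit_singleton_true]
  split_ifs <;> simp only [decide_eq_true_eq, true_iff, false_iff] <;> omega

lemma bit_progPattern {p : ℕ} (hp : 0 < p) (j : ℕ) :
    bit (progPattern p) j = true ↔ j = 0 ∨ j = p ∨ j = 2 * p := by
  rw [progPattern_eq, bit_true_cons_replicate_append]
  split_ifs
  · simp_all
  · simp only [false_iff]
    omega
  · rw [bit_gapPattern]
    omega

section SparseSets

variable {p i : ℕ} {S : Set ℕ}

structure Sparse (p : ℕ) (S : Set ℕ) : Prop where
  sep : ∀ a ∈ S, ∀ b ∈ S, a < b → a + p ≤ b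
  no_progression : ∀ a ∈ S, a + p ∈ S → a + 2 * p ∉ S

lemma Sparse.mono {T : Set ℕ} (hS : Sparse p S) (hT : T ⊆ S) : Sparse p T :=
  ⟨fun a ha b hb => hS.sep a (hT ha) b (hT hb),
    fun a ha hap h => hS.no_progression a (hT ha) (hT hap) (hT h)⟩

lemma Sparse.preimage_add (hS : Sparse p S) (c : ℕ) : Sparse p ((c + ·) ⁻¹' S) := by
  refine ⟨fun a ha b hb hab => ?_, fun a ha hap h => ?_⟩
  · have := hS.sep (c + a) ha (c + b) hb (by omega)
    omega
  · rw [Set.mem_preimage, ← add_assoc] at hap h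
    exact hS.no_progression (c + a) ha hap h

lemma Sparse.insert (hS : Sparse p S) (hp : 0 < p)
    (hfar : ∀ j ∈ S, i + p ≤ j ∨ j + p ≤ i)
    (hright : i + p ∈ S → i + 2 * p ∉ S)
    (hmid : ∀ a ∈ S, a + p = i → i + p ∉ S)
    (hleft : ∀ a ∈ S, a + 2 * p = i → a + p ∉ S) : Sparse p (insert i S) := by
  constructor
  · rintro a (rfl | ha) b (rfl | hb) hab
    · omega
    · exact (hfar b hb).resolve_right (by omega)
    · exact (hfar a ha).resolve_left (by omega)
    · exact hS.sep a ha b hb hab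
  · rintro a (rfl | ha) (hap | hap) (h | h)
    all_goals first
      | omega
      | exact hright hap h
      | exact hmid a ha hap (by rwa [← hap, add_assoc, ← two_mul])
      | exact hleft a ha h hap
      | exact hS.no_progression a ha hap h

lemma Sparse.glue {A B T : Set ℕ} {c : ℕ} (hA : Sparse p A) (hB : Sparse p B)
    (hlow : ∀ x ∈ T, x < c → x ∈ A ∧ x + p < c) (hhigh : ∀ y, c + y ∈ T → y ∈ B) :
    Sparse p T := by
  constructor
  · intro a ha b hb hab
    by_cases hbc : b < c
    · exact hA.sep a (hlow a ha (by omega)).1 b (hlow b hb hbc).1 hab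
    by_cases hac : a < c
    · have := (hlow a ha hac).2
      omega
    obtain ⟨a, rfl⟩ := Nat.exists_eq_add_of_le (not_lt.1 hac)
    obtain ⟨b, rfl⟩ := Nat.exists_eq_add_of_le (not_lt.1 hbc)
    have := hB.sep a (hhigh a ha) b (hhigh b hb) (by omega)
    omega
  · intro a ha hap ha2p
    by_cases hac : a < c
    · obtain ⟨ha, hac⟩ := hlow a ha hac
      obtain ⟨hap, hac⟩ := hlow _ hap hac
      exact hA.no_progression a ha hap (hlow _ ha2p (by omega)).1
    · obtain ⟨a, rfl⟩ := Nat.exists_eq_add_of_le (not_lt.1 hac)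
      exact hB.no_progression a (hhigh a ha) (hhigh _ (by rwa [add_assoc] at hap))
        (hhigh _ (by rwa [add_assoc] at ha2p))

def Blocked (p : ℕ) (S : Set ℕ) (i : ℕ) : Prop :=
  (∃ j ∈ S, i < j + p ∧ j < i + p) ∨ (i + p ∈ S ∧ ∃ a ∈ S, a + p = i)

lemma not_sparse_insert_of_blocked (hi : i ∉ S) (h : Blocked p S i) :
    ¬ Sparse p (insert i S) := by
  intro hS
  rcases h with ⟨j, hj, h1, h2⟩ | ⟨hip, a, ha, rfl⟩
  · rcases lt_or_gt_of_ne (show j ≠ i by rintro rfl; exact hi hj) with hji | hji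
    · have := hS.sep j (Set.mem_insert_of_mem _ hj) i (Set.mem_insert _ _) hji
      omega
    · have := hS.sep i (Set.mem_insert _ _) j (Set.mem_insert_of_mem _ hj) hji
      omega
  · exact hS.no_progression a (Set.mem_insert_of_mem _ ha) (Set.mem_insert _ _)
      (Set.mem_insert_of_mem _ (by rwa [two_mul, ← add_assoc]))

lemma blocked_of_near {j : ℕ} (hj : j ∈ S) (h1 : i < j + p) (h2 : j < i + p) : Blocked p S i :=
  Or.inl ⟨j, hj, h1, h2⟩

lemma blocked_of_between {a b : ℕ} (ha : a ∈ S) (hb : b ∈ S) (hai : a < i) (hib : i < b)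
    (hab : b ≤ a + 2 * p) : Blocked p S i := by
  by_cases h1 : i < a + p
  · exact blocked_of_near ha h1 (by omega)
  by_cases h2 : b < i + p
  · exact blocked_of_near hb (by omega) h2
  · exact Or.inr ⟨by rwa [show i + p = b by omega], a, ha, by omega⟩

end SparseSets

lemma OCode.sep {p r : ℕ} {w : List Bool} (hw : OCode p r w) :
    ∀ a ∈ ones w, ∀ b ∈ ones w, a < b → a + p ≤ b := by
  intro a ha b hb hab
  by_contra hba
  classical
  have hex : ∃ e, 0 < e ∧ a + e ∈ ones w :=
    ⟨b - a, by omega, by rwa [Nat.add_sub_cancel' hab.le]⟩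
  obtain ⟨e, ⟨he0, he⟩, hmin⟩ : ∃ e, (0 < e ∧ a + e ∈ ones w) ∧
      ∀ j < e, ¬(0 < j ∧ a + j ∈ ones w) :=
    ⟨Nat.find hex, Nat.find_spec hex, fun j => Nat.find_min hex⟩
  have heb : e ≤ b - a := by
    by_contra h
    exact hmin (b - a) (by omega) ⟨by omega, by rwa [Nat.add_sub_cancel' hab.le]⟩
  -- the ones at `a` and `a + e` are consecutive, so `w` contains the factor `1 0^(e-1) 1`
  refine hw.2 (e - 1) (by omega)
    ((infix_iff_bit (t := gapPattern (e - 1))).2 ⟨a, ?_, fun j hj => ?_⟩)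
  · have := lt_length_of_mem_ones he
    rw [length_gapPattern]
    omega
  rw [length_gapPattern] at hj
  rw [Bool.eq_iff_iff, bit_gapPattern]
  rcases Nat.eq_zero_or_pos j with rfl | hj0
  · simpa using ha
  by_cases hje : j < e
  · have : a + j ∉ ones w := fun h => hmin j hje ⟨hj0, h⟩
    simp only [mem_ones, Bool.not_eq_true] at this
    simp only [this, Bool.false_eq_true, false_iff]
    omega
  · rw [show j = e by omega]
    simpa [show e - 1 + 1 = e by omega] using he

lemma sparse_of_oCode_two {p : ℕ} (hp : 0 < p) {w : List Bool} (hw : OCode p 2 w) :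
    Sparse p (ones w) := by
  refine ⟨hw.sep, fun a ha hap ha2p =>
    hw.1 ((infix_iff_bit (t := progPattern p)).2 ⟨a, ?_, fun j hj => ?_⟩)⟩
  · have := lt_length_of_mem_ones ha2p
    rw [length_progPattern hp]
    omega
  rw [length_progPattern hp] at hj
  rw [Bool.eq_iff_iff, bit_progPattern hp]
  by_cases hj' : j = 0 ∨ j = p ∨ j = 2 * p
  · rcases hj' with rfl | rfl | rfl
    · simpa using ha
    · simpa using hap
    · simpa using ha2p
  · have : a + j ∉ ones w := fun h => by
      rcases lt_or_gt_of_ne (show j ≠ p by omega) with hjp | hjp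
      · have := hw.sep a ha (a + j) h (by omega)
        omega
      · have := hw.sep (a + p) hap (a + j) h (by omega)
        omega
    simp only [mem_ones, Bool.not_eq_true] at this
    simp [this, hj']

lemma oCode_two_of_sparse {p : ℕ} (hp : 0 < p) {w : List Bool} (hw : Sparse p (ones w)) :
    OCode p 2 w := by
  refine ⟨fun hin => ?_, fun s hs hin => ?_⟩
  · obtain ⟨k, hk, h⟩ := (infix_iff_bit (t := progPattern p)).1 hin
    rw [length_progPattern hp] at h
    have hbit (j : ℕ) (hj : j = 0 ∨ j = p ∨ j = 2 * p) : k + j ∈ ones w :=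
      (h j (by omega)).trans ((bit_progPattern hp j).2 hj)
    exact hw.no_progression k (by simpa using hbit 0 (by simp)) (hbit p (by simp))
      (hbit (2 * p) (by simp))
  · obtain ⟨k, hk, h⟩ := (infix_iff_bit (t := gapPattern s)).1 hin
    rw [length_gapPattern] at h
    have hbit (j : ℕ) (hj : j = 0 ∨ j = s + 1) : k + j ∈ ones w :=
      (h j (by omega)).trans ((bit_gapPattern s j).2 hj)
    have := hw.sep k (by simpa using hbit 0 (by simp)) _ (hbit (s + 1) (by simp)) (by omega)
    omega

theorem oCode_two_iff_sparse {p : ℕ} (hp : 0 < p) {w : List Bool} :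
    OCode p 2 w ↔ Sparse p (ones w) :=
  ⟨sparse_of_oCode_two hp, oCode_two_of_sparse hp⟩

section Flips

variable {p i : ℕ} {w : List Bool}

def flipAt (w : List Bool) (i : ℕ) : List Bool := w.set i (!bit w i)

@[simp] lemma length_flipAt : (flipAt w i).length = w.length := List.length_set ..

lemma bit_flipAt (hi : i < w.length) (x : ℕ) :
    bit (flipAt w i) x = if x = i then !bit w i else bit w x := by
  simp only [flipAt, bit, List.getElem?_set]
  by_cases hx : x = i
  · simp [hx, hi]
  · simp [hx, Ne.symm hx]

lemma bit_flipAt_of_ne {x : ℕ} (hx : x ≠ i) : bit (flipAt w i) x = bit w x := by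
  simp [flipAt, bit, Ne.symm hx]

lemma ones_flipAt_subset (hi : i ∈ ones w) : ones (flipAt w i) ⊆ ones w := by
  intro x hx
  by_cases hxi : x = i
  · exact hxi ▸ hi
  · rwa [mem_ones, ← bit_flipAt_of_ne hxi]

lemma ones_flipAt_of_notMem (hi : i < w.length) (h : i ∉ ones w) :
    ones (flipAt w i) = insert i (ones w) := by
  ext x
  simp only [mem_ones, Set.mem_insert_iff, bit_flipAt hi]
  split_ifs with hx <;> simp_all

lemma flipAt_cons_zero (a : Bool) (u : List Bool) : flipAt (a :: u) 0 = (!a) :: u := by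
  simp [flipAt, bit]

lemma flipAt_cons_succ (a : Bool) (u : List Bool) (i : ℕ) :
    flipAt (a :: u) (i + 1) = a :: flipAt u i := by
  simp [flipAt, bit]

lemma flipAt_injOn (w : List Bool) : Set.InjOn (flipAt w) (Set.Iio w.length) := by
  intro i hi j _ h
  by_contra hij
  have := congrArg (bit · i) h
  simp [bit_flipAt hi, bit_flipAt_of_ne hij] at this

noncomputable def flippable (p : ℕ) (w : List Bool) : Finset ℕ :=
  open Classical in {i ∈ range w.length | Sparse p (ones (flipAt w i))}

lemma mem_flippable : i ∈ flippable p w ↔ i < w.length ∧ Sparse p (ones (flipAt w i)) := by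
  simp [flippable]

lemma mem_flippable_of_mem_ones (hw : Sparse p (ones w)) (hi : i ∈ ones w) :
    i ∈ flippable p w :=
  mem_flippable.2 ⟨lt_length_of_mem_ones hi, hw.mono (ones_flipAt_subset hi)⟩

lemma mem_flippable_of_notMem (hi : i < w.length) (h : i ∉ ones w)
    (hS : Sparse p (insert i (ones w))) : i ∈ flippable p w :=
  mem_flippable.2 ⟨hi, ones_flipAt_of_notMem hi h ▸ hS⟩

end Flips

section Degree

lemma hdist_cons (a b : Bool) (u v : List Bool) :
    hdist (a :: u) (b :: v) = hdist u v + if a = b then 0 else 1 := by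
  cases a <;> cases b <;> simp [hdist]

lemma hdist_comm (u v : List Bool) : hdist u v = hdist v u := by
  rw [hdist, hdist, List.zipWith_comm_of_comm fun _ _ => bne_comm]

lemma hdist_self (u : List Bool) : hdist u u = 0 := by
  induction u with
  | nil => rfl
  | cons a u ih => simp [hdist_cons, ih]

lemma eq_of_hdist_eq_zero {u v : List Bool} (hlen : u.length = v.length) (h : hdist u v = 0) :
    u = v := by
  induction u generalizing v with
  | nil => exact (List.length_eq_zero_iff.1 hlen.symm).symm
  | cons a u ih =>
    obtain _ | ⟨b, v⟩ := v
    · simp at hlen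
    rw [hdist_cons] at h
    split_ifs at h with hab
    rw [hab, ih (by simpa using hlen) (by omega)]

lemma hdist_eq_one_iff {u v : List Bool} (hlen : u.length = v.length) :
    hdist u v = 1 ↔ ∃ i < u.length, v = flipAt u i := by
  induction u generalizing v with
  | nil => simp [hdist]
  | cons a u ih =>
    obtain _ | ⟨b, v⟩ := v
    · simp at hlen
    simp only [List.length_cons, Nat.add_right_cancel_iff] at hlen
    rw [hdist_cons]
    constructor
    · intro h
      split_ifs at h with hab
      · obtain ⟨i, hi, rfl⟩ := (ih hlen).1 h
        exact ⟨i + 1, by simpa, by rw [flipAt_cons_succ, hab]⟩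
      · refine ⟨0, by simp, ?_⟩
        rw [flipAt_cons_zero, eq_of_hdist_eq_zero hlen (by omega)]
        cases a <;> cases b <;> simp_all
    · rintro ⟨_ | i, hi, h⟩
      · rw [flipAt_cons_zero] at h
        obtain ⟨rfl, rfl⟩ := List.cons.inj h
        simp [hdist_self]
      · rw [flipAt_cons_succ] at h
        obtain ⟨rfl, rfl⟩ := List.cons.inj h
        simp [(ih (by simp)).2 ⟨i, by simpa using hi, rfl⟩]

lemma oGraph_adj_iff {p r n : ℕ} {u v : OVert p r n} :
    (OGraph p r n).Adj u v ↔ hdist u.1 v.1 = 1 := by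
  simp only [OGraph, SimpleGraph.fromRel_adj, hdist_comm v.1 u.1, or_self, and_iff_right_iff_imp]
  rintro h rfl
  simp [hdist_self] at h

lemma deg_eq_card_flippable {p n : ℕ} (hp : 0 < p) (v : OVert p 2 n) :
    deg (OGraph p 2 n) v = #(flippable p v.1) := by
  have hlen : v.1.length = n := v.2.1
  have hnbr : Subtype.val '' {u | (OGraph p 2 n).Adj v u} = flipAt v.1 '' ↑(flippable p v.1) := by
    ext x
    constructor
    · rintro ⟨u, hu, rfl⟩
      obtain ⟨i, hi, hui⟩ := (hdist_eq_one_iff (by rw [hlen, u.2.1])).1 (oGraph_adj_iff.1 hu)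
      refine ⟨i, mem_flippable.2 ⟨hi, ?_⟩, hui.symm⟩
      rw [← hui]
      exact (oCode_two_iff_sparse hp).1 u.2.2
    · rintro ⟨i, hi, rfl⟩
      obtain ⟨hi, hsp⟩ := mem_flippable.1 hi
      exact ⟨⟨flipAt v.1 i, by simpa, (oCode_two_iff_sparse hp).2 hsp⟩,
        oGraph_adj_iff.2 ((hdist_eq_one_iff (by simp)).2 ⟨i, hi, rfl⟩), rfl⟩
  calc deg (OGraph p 2 n) v
      = (Subtype.val '' {u | (OGraph p 2 n).Adj v u}).ncard :=
        (Set.ncard_image_of_injective _ Subtype.val_injective).symm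
    _ = #(flippable p v.1) := by
      rw [hnbr, Set.InjOn.ncard_image ((flipAt_injOn _).mono fun i hi => (mem_flippable.1 hi).1),
        Set.ncard_coe_finset]

end Degree

section LowerBound

variable {p : ℕ} {w : List Bool}

lemma add_mem_flippable_of_mem_flippable_drop {c j : ℕ} (hw : Sparse p (ones w))
    (hgap : ∀ x ∈ ones w, x < c → x + p < c) (hj : j ∈ flippable p (w.drop c)) :
    c + j ∈ flippable p w := by
  obtain ⟨hjl, hsp⟩ := mem_flippable.1 hj
  have hcj : c + j < w.length := by rw [List.length_drop] at hjl; omega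
  refine mem_flippable.2 ⟨hcj, hw.glue (c := c) hsp (fun x hx hxc => ?_) (fun y hy => ?_)⟩
  · rw [mem_ones, bit_flipAt_of_ne (by omega)] at hx
    exact ⟨hx, hgap x hx hxc⟩
  · rw [mem_ones, bit_flipAt hcj] at hy
    rw [mem_ones, bit_flipAt hjl, bit_drop, bit_drop]
    simpa using hy

/-- The prefix `w.take c` split off in the induction of `length_lt_card_flippable`; `gap` is what
makes flips of `w.drop c` lift to flips of `w`. -/
structure Cut (p : ℕ) (w : List Bool) (E : Finset ℕ) (c : ℕ) : Prop where
  pos : 0 < c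
  subset : E ⊆ flippable p w
  lt : ∀ i ∈ E, i < c
  gap : ∀ x ∈ ones w, x < c → x + p < c
  le : c ≤ 2 * p * #E
  length_lt : w.length ≤ c → w.length < 2 * p * #E

lemma Cut.card_add_card_flippable_drop_le {E : Finset ℕ} {c : ℕ} (h : Cut p w E c)
    (hw : Sparse p (ones w)) : #E + #(flippable p (w.drop c)) ≤ #(flippable p w) := by
  have hdisj : Disjoint E ((flippable p (w.drop c)).map (addLeftEmbedding c)) := by
    refine Finset.disjoint_left.2 fun i hi hi' => ?_
    obtain ⟨j, -, rfl⟩ := Finset.mem_map.1 hi'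
    exact absurd (h.lt _ hi) (by simp)
  calc #E + #(flippable p (w.drop c))
      = #(E ∪ (flippable p (w.drop c)).map (addLeftEmbedding c)) := by
        rw [card_union_of_disjoint hdisj, card_map]
    _ ≤ #(flippable p w) := card_le_card <| union_subset h.subset fun i hi => by
        obtain ⟨j, hj, rfl⟩ := Finset.mem_map.1 hi
        exact add_mem_flippable_of_mem_flippable_drop hw h.gap hj

lemma cut_pair (hp : 2 ≤ p) (hw : Sparse p (ones w)) {q : ℕ} (hq : q ≤ p) (h0 : q ∈ ones w)
    (h1 : q + p ∈ ones w) : Cut p w {q, q + p} (q + 2 * p + 1) where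
  pos := by omega
  subset := insert_subset (mem_flippable_of_mem_ones hw h0)
    (singleton_subset_iff.2 (mem_flippable_of_mem_ones hw h1))
  lt := by simp only [mem_insert, mem_singleton, forall_eq_or_imp, forall_eq]; omega
  gap x hx hxc := by
    by_contra hx'
    rcases lt_or_eq_of_le (show x ≤ q + 2 * p by omega) with hlt | rfl
    · have := hw.sep _ h1 x hx (by omega)
      omega
    · exact hw.no_progression q h0 h1 hx
  le := by rw [card_pair (by omega)]; omega
  length_lt _ := by rw [card_pair (by omega)]; omega

lemma cut_single (hw : Sparse p (ones w)) {q : ℕ} (hq : q < p) (h0 : q ∈ ones w)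
    (h1 : q + p ∉ ones w) (hn : q + p + 1 < w.length ∨ w.length < 2 * p) :
    Cut p w {q} (q + p + 1) where
  pos := by omega
  subset := singleton_subset_iff.2 (mem_flippable_of_mem_ones hw h0)
  lt := by simp
  gap x hx hxc := by
    by_contra hx'
    rcases lt_or_eq_of_le (show x ≤ q + p by omega) with hlt | rfl
    · have := hw.sep _ h0 x hx (by omega)
      omega
    · exact h1 hx
  le := by rw [card_singleton]; omega
  length_lt _ := by rw [card_singleton]; omega

lemma cut_end (hw : Sparse p (ones w)) (hn : w.length = 2 * p) (h0 : p - 1 ∈ ones w)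
    (h1 : 2 * p - 1 ∉ ones w) : Cut p w {p - 1, 2 * p - 1} (3 * p) := by
  have hp : 0 < p := by have := lt_length_of_mem_ones h0; omega
  have hone : ∀ x ∈ ones w, x = p - 1 := by
    intro x hx
    have := lt_length_of_mem_ones hx
    rcases lt_trichotomy x (p - 1) with hlt | heq | hgt
    · have := hw.sep x hx _ h0 hlt
      omega
    · exact heq
    · have := hw.sep _ h0 x hx hgt
      exact absurd (show x = 2 * p - 1 by omega ▸ hx) h1
  have hend : 2 * p - 1 ∈ flippable p w := by
    refine mem_flippable_of_notMem (by omega) h1 (hw.insert hp ?_ ?_ ?_ ?_)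
    · intro j hj
      rw [hone j hj]
      omega
    · intro h
      have := lt_length_of_mem_ones h
      omega
    · intro a _ _ h
      have := lt_length_of_mem_ones h
      omega
    · intro a _ h
      omega
  exact {
    pos := by omega
    subset := insert_subset (mem_flippable_of_mem_ones hw h0) (singleton_subset_iff.2 hend)
    lt := by simp only [mem_insert, mem_singleton, forall_eq_or_imp, forall_eq]; omega
    gap := fun x hx _ => by rw [hone x hx]; omega
    le := by rw [card_pair (by omega)]; omega
    length_lt := fun _ => by rw [card_pair (by omega)]; omega }

lemma cut_head (hp : 0 < p) (hw : Sparse p (ones w)) (hn : w ≠ [])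
    (hz : ∀ x ∈ ones w, p ≤ x)
    (hpair : ¬(p ∈ ones w ∧ 2 * p ∈ ones w)) : Cut p w {0} p where
  pos := hp
  subset := by
    have h0 : 0 ∉ ones w := fun h => by have := hz 0 h; omega
    refine singleton_subset_iff.2 (mem_flippable_of_notMem (List.length_pos_of_ne_nil hn) h0
      (hw.insert hp (fun j hj => Or.inl (by simpa using hz j hj)) (fun h1 h2 => ?_)
        (fun a _ h => by omega) (fun a _ h => by omega)))
    exact hpair ⟨by simpa using h1, by simpa using h2⟩
  lt := by simpa
  gap x hx hxp := by have := hz x hx; omega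
  le := by rw [card_singleton]; omega
  length_lt _ := by rw [card_singleton]; omega

lemma exists_cut (hp : 2 ≤ p) (hw : Sparse p (ones w)) (hn : w ≠ []) :
    ∃ E c, Cut p w E c := by
  by_cases h : ∃ q < p, q ∈ ones w
  · obtain ⟨q, hq, h0⟩ := h
    by_cases h1 : q + p ∈ ones w
    · exact ⟨_, _, cut_pair hp hw hq.le h0 h1⟩
    by_cases hlen : q + p + 1 < w.length ∨ w.length < 2 * p
    · exact ⟨_, _, cut_single hw hq h0 h1 hlen⟩
    -- then `w = 0^(p-1) 1 0^p`, whose last position is flippable as well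
    obtain rfl : q = p - 1 := by omega
    exact ⟨_, _, cut_end hw (by omega) h0 (by rwa [show 2 * p - 1 = p - 1 + p by omega])⟩
  · push Not at h
    by_cases hpair : p ∈ ones w ∧ 2 * p ∈ ones w
    · exact ⟨_, _, cut_pair hp hw le_rfl hpair.1 (by rw [← two_mul]; exact hpair.2)⟩
    · exact ⟨_, _, cut_head (by omega) hw hn (fun x hx => not_lt.1 fun hxp => h x hxp hx)
        hpair⟩

theorem length_lt_card_flippable (hp : 2 ≤ p) (hw : Sparse p (ones w)) (hn : w ≠ []) :
    w.length < 2 * p * #(flippable p w) := by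
  induction hlen : w.length using Nat.strong_induction_on generalizing w with
  | _ n ih =>
  subst hlen
  obtain ⟨E, c, hcut⟩ := exists_cut hp hw hn
  rcases lt_or_ge c w.length with hc | hc
  · have hdrop := ih (w.drop c).length (by rw [List.length_drop]; have := hcut.pos; omega)
      (ones_drop (w := w) c ▸ hw.preimage_add c) (by rw [ne_eq, List.drop_eq_nil_iff]; omega) rfl
    have hcard := hcut.card_add_card_flippable_drop_le hw
    have hle := hcut.le
    calc w.length = c + (w.drop c).length := by rw [List.length_drop]; omega
      _ < 2 * p * #E + 2 * p * #(flippable p (w.drop c)) := by omega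
      _ ≤ 2 * p * #(flippable p w) := by rw [← mul_add]; exact Nat.mul_le_mul_left _ hcard
  · exact (hcut.length_lt hc).trans_le (Nat.mul_le_mul_left _ (card_le_card hcut.subset))

lemma div_add_one_le_deg {p n : ℕ} (hp : 2 ≤ p) (hn : 1 ≤ n) (v : OVert p 2 n) :
    n / (2 * p) + 1 ≤ deg (OGraph p 2 n) v := by
  have := length_lt_card_flippable hp ((oCode_two_iff_sparse (by omega)).1 v.2.2)
    (List.ne_nil_of_length_pos (by rw [v.2.1]; omega))
  rw [v.2.1] at this
  rwa [deg_eq_card_flippable (by omega), Nat.add_one_le_iff, Nat.div_lt_iff_lt_mul (by omega),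
    mul_comm]

end LowerBound

section Extremal

variable {p n d m : ℕ}

def wordOf (n : ℕ) (S : Finset ℕ) : List Bool := (List.range n).map (· ∈ S)

@[simp] lemma length_wordOf (T : Finset ℕ) : (wordOf n T).length = n := by simp [wordOf]

lemma ones_wordOf {T : Finset ℕ} (hT : ∀ i ∈ T, i < n) : ones (wordOf n T) = ↑T := by
  ext i
  by_cases hi : i < n
  · simp [wordOf, bit, List.getElem?_map, List.getElem?_range hi]
  · have hi' : (List.range n).length ≤ i := by rw [List.length_range]; omega
    simp only [wordOf, mem_ones, bit, List.getElem?_map, List.getElem?_eq_none hi',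
      Option.map_none, Option.getD_none, Bool.false_eq_true, false_iff, Finset.mem_coe]
    exact fun h => hi (hT i h)

lemma flippable_wordOf {T : Finset ℕ} (hT : ∀ i ∈ T, i < n) (hsp : Sparse p ↑T)
    (hblocked : ∀ i < n, i ∉ T → Blocked p ↑T i) : flippable p (wordOf n T) = T := by
  ext i
  constructor
  · intro hi
    obtain ⟨hin, hsp'⟩ := mem_flippable.1 hi
    by_contra hiT
    rw [length_wordOf] at hin
    rw [ones_flipAt_of_notMem (by simpa) (by rwa [ones_wordOf hT]), ones_wordOf hT] at hsp'
    exact not_sparse_insert_of_blocked (by simpa) (hblocked i hin hiT) hsp'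
  · intro hi
    exact mem_flippable_of_mem_ones (ones_wordOf hT ▸ hsp) (by rw [ones_wordOf hT]; exact hi)

lemma exists_deg_eq_card (hp : 0 < p) {T : Finset ℕ} (hT : ∀ i ∈ T, i < n)
    (hsp : Sparse p ↑T)
    (hblocked : ∀ i < n, i ∉ T → Blocked p ↑T i) :
    ∃ v : OVert p 2 n, deg (OGraph p 2 n) v = #T :=
  ⟨⟨wordOf n T, length_wordOf T, (oCode_two_iff_sparse hp).2 (ones_wordOf hT ▸ hsp)⟩,
    (deg_eq_card_flippable hp _).trans (congrArg card (flippable_wordOf hT hsp hblocked))⟩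

lemma exists_deg_eq_one (hp : 0 < p) (hn : 1 ≤ n) (hn' : n < 2 * p) :
    ∃ v : OVert p 2 n, deg (OGraph p 2 n) v = 1 := by
  have hsp : Sparse p ↑({min n p - 1} : Finset ℕ) := by
    constructor <;> simp only [coe_singleton, Set.mem_singleton_iff] <;> omega
  simpa using exists_deg_eq_card hp (by simp only [mem_singleton, forall_eq]; omega) hsp
    fun i hi hiT => blocked_of_near (Finset.mem_coe.2 (Finset.mem_singleton_self _)) (by omega)
      (by rw [mem_singleton] at hiT; omega)

def extremalOnes (p d m : ℕ) : Finset ℕ :=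
  insert (p - 1) ((range m).image fun j => p - 1 + d + 2 * p * j)

lemma mem_extremalOnes {x : ℕ} :
    x ∈ extremalOnes p d m ↔ x = p - 1 ∨ ∃ j < m, p - 1 + d + 2 * p * j = x := by
  simp [extremalOnes]

lemma card_extremalOnes (hp : 0 < p) (hd : 0 < d) : #(extremalOnes p d m) = m + 1 := by
  rw [extremalOnes, card_insert_of_notMem, card_image_of_injective, card_range]
  · intro j k h
    exact Nat.eq_of_mul_eq_mul_left (by omega : 0 < 2 * p) (by simpa using h)
  · simp only [mem_image, not_exists, not_and]
    intro j _ h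
    omega

lemma mul_add_self_le_mul_of_lt {a j k : ℕ} (h : j < k) : a * j + a ≤ a * k := by
  simpa [Nat.mul_succ] using Nat.mul_le_mul_left a h

lemma sparse_extremalOnes (hp : 0 < p) (hd : p ≤ d) : Sparse p ↑(extremalOnes p d m) := by
  constructor
  · intro a ha b hb hab
    simp only [Finset.mem_coe, mem_extremalOnes] at ha hb
    rcases ha with rfl | ⟨j, -, rfl⟩ <;> rcases hb with rfl | ⟨k, -, rfl⟩
    · omega
    · omega
    · omega
    · rcases lt_trichotomy j k with h | rfl | h
      · have := mul_add_self_le_mul_of_lt (a := 2 * p) h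
        omega
      · omega
      · have := mul_add_self_le_mul_of_lt (a := 2 * p) h
        omega
  · intro a ha hap ha2p
    simp only [Finset.mem_coe, mem_extremalOnes] at ha hap ha2p
    have ha' : p - 1 ≤ a := by rcases ha with rfl | ⟨j, -, rfl⟩ <;> omega
    obtain ⟨j, -, hj⟩ := hap.resolve_left (by omega)
    obtain ⟨k, -, hk⟩ := ha2p.resolve_left (by omega)
    rcases lt_trichotomy j k with h | rfl | h
    · have := mul_add_self_le_mul_of_lt (a := 2 * p) h
      omega
    · omega
    · have := mul_add_self_le_mul_of_lt (a := 2 * p) h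
      omega

lemma extremalOnes_lt (hlast : p - 1 + d + 2 * p * m < n + 2 * p) (hn : p ≤ n) :
    ∀ i ∈ extremalOnes p d m, i < n := by
  intro i hi
  rcases mem_extremalOnes.1 hi with rfl | ⟨j, hj, rfl⟩
  · omega
  · have := mul_add_self_le_mul_of_lt (a := 2 * p) hj
    omega

lemma blocked_extremalOnes {i : ℕ} (hp : 0 < p) (hd : d ≤ 2 * p) (hm : 0 < m)
    (hlast : n + 1 ≤ d + 2 * p * m) (hi : i < n) (hiS : i ∉ extremalOnes p d m) :
    Blocked p ↑(extremalOnes p d m) i := by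
  have mem_a {j : ℕ} (hj : j < m) :
      p - 1 + d + 2 * p * j ∈ (↑(extremalOnes p d m) : Set ℕ) :=
    mem_extremalOnes.2 (Or.inr ⟨j, hj, rfl⟩)
  have mem_q : p - 1 ∈ (↑(extremalOnes p d m) : Set ℕ) := mem_extremalOnes.2 (Or.inl rfl)
  have hne_q : i ≠ p - 1 := fun h => hiS (mem_extremalOnes.2 (Or.inl h))
  rcases lt_or_gt_of_ne hne_q with h | h
  · exact blocked_of_near mem_q (by omega) (by omega)
  by_cases h0 : i < p - 1 + d
  · exact blocked_of_between mem_q (by simpa using mem_a hm) h (by omega) (by omega)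
  obtain ⟨e, rfl⟩ := Nat.exists_eq_add_of_le (not_lt.1 h0)
  obtain ⟨j, r, hr, rfl⟩ : ∃ j r, r < 2 * p ∧ e = 2 * p * j + r :=
    ⟨e / (2 * p), e % (2 * p), Nat.mod_lt e (by omega), (Nat.div_add_mod e (2 * p)).symm⟩
  have hjm : j < m := by
    by_contra hjm
    have := Nat.mul_le_mul_left (2 * p) (not_lt.1 hjm)
    omega
  have hr0 : r ≠ 0 := fun hr0 => hiS (mem_extremalOnes.2 (Or.inr ⟨j, hjm, by omega⟩))
  rcases lt_or_ge (j + 1) m with hj1 | hj1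
  · have hnext := mem_a hj1
    rw [show 2 * p * (j + 1) = 2 * p * j + 2 * p by ring] at hnext
    exact blocked_of_between (mem_a hjm) hnext (by omega) (by omega) (by omega)
  · have : 2 * p * m = 2 * p * j + 2 * p := by rw [show m = j + 1 by omega]; ring
    exact blocked_of_near (mem_a hjm) (by omega) (by omega)

lemma exists_deg_eq_div_add_one (hp : 0 < p) (hn : 2 * p ≤ n) :
    ∃ v : OVert p 2 n, deg (OGraph p 2 n) v = n / (2 * p) + 1 := by
  have hdiv := Nat.div_add_mod n (2 * p)
  have ht := Nat.mod_lt n (show 2 * p > 0 by omega)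
  have hm : 0 < n / (2 * p) := Nat.div_pos hn (by omega)
  generalize n / (2 * p) = m at hdiv hm ⊢
  generalize n % (2 * p) = t at hdiv ht
  -- `d ∈ {p, 2p}` is chosen so that the last one lies within `p` of the end of the word
  obtain ⟨d, hpd, hd, hlo, hhi⟩ : ∃ d, p ≤ d ∧ d ≤ 2 * p ∧
      p - 1 + d + 2 * p * m < n + 2 * p ∧ n + 1 ≤ d + 2 * p * m := by
    rcases lt_or_ge t p with h | h
    · exact ⟨p, le_rfl, by omega, by omega, by omega⟩
    · exact ⟨2 * p, by omega, le_rfl, by omega, by omega⟩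
  rw [← card_extremalOnes (p := p) (d := d) hp (by omega)]
  exact exists_deg_eq_card hp (extremalOnes_lt hlo (by omega)) (sparse_extremalOnes hp hpd)
    fun i hi hiS => blocked_extremalOnes hp hd hm hhi hi hiS

end Extremal

/-- for `p ≥ 2`, `δ(OΓ_n^{(p,2)}) = 1` if `n ≤ 2p−1` and
`δ(OΓ_n^{(p,2)}) = ⌊n/(2p)⌋ + 1` if `n ≥ 2p`. -/
theorem OGraph_min_degree_r_two (p n : ℕ) (hp : 2 ≤ p) (hn : 1 ≤ n) :
    (n ≤ 2 * p - 1 →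
      (∀ v : OVert p 2 n, 1 ≤ deg (OGraph p 2 n) v) ∧
      (∃ v : OVert p 2 n, deg (OGraph p 2 n) v = 1)) ∧
    (2 * p ≤ n →
      (∀ v : OVert p 2 n, n / (2 * p) + 1 ≤ deg (OGraph p 2 n) v) ∧
      (∃ v : OVert p 2 n, deg (OGraph p 2 n) v = n / (2 * p) + 1)) := by
  refine ⟨fun hsmall => ⟨fun v => ?_, exists_deg_eq_one (by omega) hn (by omega)⟩,
    fun hbig => ⟨div_add_one_le_deg hp hn, exists_deg_eq_div_add_one (by omega) hbig⟩⟩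
  simpa [Nat.div_eq_of_lt (show n < 2 * p by omega)] using div_add_one_le_deg hp hn v
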